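/- arXiv:2002.07295 — 4 statements merged into one kernel-verified Lean document; each statement's English description precedes it below -/
import Mathlib

section
/- Let q be a complex polynomial of degree n ≥ 1. Then there exists a constant C > 1 such that the pair (u₁⁺, u₂⁺) = ((3/8) log(|q|² + C), (1/8) log(|q|² + 3C)) is a supersolution of the planar Hitchin system associated to q on all of ℂ; that is, for every z ∈ ℂ: Δu₁⁺(z) ≤ e^{u₁⁺(z) − u₂⁺(z)} − e^{−2u₁⁺(z)} |q(z)|² and Δu₂⁺(z) ≤ e^{2u₂⁺(z)} − e^{u₁⁺(z) − u₂⁺(z)}. Equivalently, there is C > 1 so that for all z ∈ ℂ: (|q|²+C)^{19/8}(|q|²+3C)^{−1/8} − (|q|²+C)^{5/4}|q|² ≥ (3/8)|q'|² C and (|q|²+3C)^{9/4} − (|q|²+C)^{3/8}(|q|²+3C)^{15/8} ≥ (3/8)|q'|² C, where q' is the derivative of q. -/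
/-- The operator `Δ = ∂_z ∂_z̄ = (1/4)(∂²/∂x² + ∂²/∂y²)` acting on functions on `ℂ`. -/
noncomputable def lap (u : ℂ → ℝ) (z : ℂ) : ℝ :=
  (1 / 4) * (iteratedFDeriv ℝ 2 u z ![1, 1] + iteratedFDeriv ℝ 2 u z ![Complex.I, Complex.I])

/-- The supersolution candidate `u₁⁺ = (3/8) log(|q|² + C)`. -/
noncomputable def uSup1 (q : Polynomial ℂ) (C : ℝ) (z : ℂ) : ℝ :=
  (3 / 8) * Real.log (‖q.eval z‖ ^ 2 + C)

/-- The supersolution candidate `u₂⁺ = (1/8) log(|q|² + 3C)`. -/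
noncomputable def uSup2 (q : Polynomial ℂ) (C : ℝ) (z : ℂ) : ℝ :=
  (1 / 8) * Real.log (‖q.eval z‖ ^ 2 + 3 * C)

open Polynomial Complex

noncomputable def dCLM (b : ℂ) : ℂ →L[ℝ] ℂ :=
  ((1 : ℂ →L[ℂ] ℂ).smulRight b).restrictScalars ℝ

@[simp] lemma dCLM_apply (b v : ℂ) : dCLM b v = v * b := by
  simp [dCLM, smul_eq_mul]

lemma hasFDerivAt_eval (p : Polynomial ℂ) (y : ℂ) :
    HasFDerivAt (fun x => p.eval x) (dCLM (p.derivative.eval y)) y :=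
  ((p.hasDerivAt y).hasFDerivAt).restrictScalars ℝ

lemma contDiff_eval (p : Polynomial ℂ) : ContDiff ℝ (⊤ : ℕ∞) fun x : ℂ => p.eval x := by
  have : ContDiff ℂ (⊤ : ℕ∞) fun x : ℂ => p.eval x := by
    induction p using Polynomial.induction_on' with
    | add p r hp hr => simpa using hp.add hr
    | monomial k a => simpa [Polynomial.eval_monomial] using
        contDiff_const.mul (contDiff_id.pow k)
  exact this.restrict_scalars ℝ

lemma fderiv_U_apply (q : Polynomial ℂ) {C : ℝ} (hC : 0 < C) (c : ℝ) (y v : ℂ) :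
    fderiv ℝ (fun x => c * Real.log
        ((q.eval x).re * (q.eval x).re + (q.eval x).im * (q.eval x).im + C)) y v =
      c * (2 * ((q.eval y).re * (v * q.derivative.eval y).re
          + (q.eval y).im * (v * q.derivative.eval y).im)) /
        ((q.eval y).re * (q.eval y).re + (q.eval y).im * (q.eval y).im + C) := by
  have hA := hasFDerivAt_eval q y
  have hre : HasFDerivAt (fun x => (q.eval x).re)
      (reCLM.comp (dCLM (q.derivative.eval y))) y := (reCLM.hasFDerivAt).comp y hA
  have him : HasFDerivAt (fun x => (q.eval x).im)
      (imCLM.comp (dCLM (q.derivative.eval y))) y := (imCLM.hasFDerivAt).comp y hA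
  have hpos : 0 < (q.eval y).re * (q.eval y).re + (q.eval y).im * (q.eval y).im + C := by
    nlinarith [sq_nonneg (q.eval y).re, sq_nonneg (q.eval y).im]
  have hh := ((hre.mul hre).add (him.mul him)).add_const C
  have hu := (hh.log hpos.ne').const_mul c
  rw [(show HasFDerivAt (fun x => c * Real.log
      ((q.eval x).re * (q.eval x).re + (q.eval x).im * (q.eval x).im + C)) _ y from hu).fderiv]
  simp only [ContinuousLinearMap.coe_smul', Pi.smul_apply, ContinuousLinearMap.add_apply,
    ContinuousLinearMap.coe_comp', Function.comp_apply, dCLM_apply, reCLM_apply, imCLM_apply,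
    smul_eq_mul, ContinuousLinearMap.smul_apply, Pi.mul_apply, Pi.add_apply]
  field_simp [hpos.ne']
  ring


lemma fderiv_G_apply (q : Polynomial ℂ) {C : ℝ} (hC : 0 < C) (c : ℝ) (z v : ℂ) :
    fderiv ℝ (fun y => c * (2 * ((q.eval y).re * (v * q.derivative.eval y).re
        + (q.eval y).im * (v * q.derivative.eval y).im)) /
      ((q.eval y).re * (q.eval y).re + (q.eval y).im * (q.eval y).im + C)) z v
    = (c * 2 * ((v * q.derivative.eval z).re ^ 2 + (v * q.derivative.eval z).im ^ 2
          + (q.eval z).re * (v * (v * q.derivative.derivative.eval z)).re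
          + (q.eval z).im * (v * (v * q.derivative.derivative.eval z)).im)
        * ((q.eval z).re ^ 2 + (q.eval z).im ^ 2 + C)
      - c * 4 * ((q.eval z).re * (v * q.derivative.eval z).re
          + (q.eval z).im * (v * q.derivative.eval z).im) ^ 2)
      / ((q.eval z).re ^ 2 + (q.eval z).im ^ 2 + C) ^ 2 := by
  have hA := hasFDerivAt_eval q z
  have hB := hasFDerivAt_eval q.derivative z
  have hre : HasFDerivAt (fun x => (q.eval x).re)
      (reCLM.comp (dCLM (q.derivative.eval z))) z := reCLM.hasFDerivAt.comp z hA
  have him : HasFDerivAt (fun x => (q.eval x).im)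
      (imCLM.comp (dCLM (q.derivative.eval z))) z := imCLM.hasFDerivAt.comp z hA
  have hvB : HasFDerivAt (fun y => v * q.derivative.eval y)
      (v • dCLM (q.derivative.derivative.eval z)) z := hB.const_mul v
  have hvre : HasFDerivAt (fun y => (v * q.derivative.eval y).re)
      (reCLM.comp (v • dCLM (q.derivative.derivative.eval z))) z :=
    reCLM.hasFDerivAt.comp z hvB
  have hvim : HasFDerivAt (fun y => (v * q.derivative.eval y).im)
      (imCLM.comp (v • dCLM (q.derivative.derivative.eval z))) z :=
    imCLM.hasFDerivAt.comp z hvB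
  have hpos : 0 < (q.eval z).re * (q.eval z).re + (q.eval z).im * (q.eval z).im + C := by
    nlinarith [sq_nonneg (q.eval z).re, sq_nonneg (q.eval z).im]
  have hS := (hre.mul hvre).add (him.mul hvim)
  have hnum := (hS.const_mul 2).const_mul c
  have hden := ((hre.mul hre).add (him.mul him)).add_const C
  have hinv := (hasFDerivAt_inv' (𝕜 := ℝ) hpos.ne').comp z hden
  have hq := hnum.mul hinv
  simp only [div_eq_mul_inv]
  have hfd := hq.fderiv
  simp only [Function.comp_def, Pi.mul_def, Pi.add_def] at hfd
  rw [hfd]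
  simp only [ContinuousLinearMap.coe_smul', Pi.smul_apply, ContinuousLinearMap.add_apply,
    ContinuousLinearMap.coe_comp', Function.comp_apply, dCLM_apply, reCLM_apply, imCLM_apply,
    smul_eq_mul, ContinuousLinearMap.smul_apply, ContinuousLinearMap.coe_sub', Pi.sub_apply,
    ContinuousLinearMap.neg_apply, ContinuousLinearMap.mulLeftRight_apply]
  field_simp [hpos.ne']
  ring

lemma lap_log (q : Polynomial ℂ) {C : ℝ} (hC : 0 < C) (c : ℝ) (z : ℂ) :
    lap (fun y => c * Real.log (‖q.eval y‖ ^ 2 + C)) z =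
      c * C * ‖q.derivative.eval z‖ ^ 2 /
        (‖q.eval z‖ ^ 2 + C) ^ 2 := by
  have hfuneq : (fun y => c * Real.log (‖q.eval y‖ ^ 2 + C)) =
      (fun x => c * Real.log
        ((q.eval x).re * (q.eval x).re + (q.eval x).im * (q.eval x).im + C)) := by
    funext x
    rw [Complex.sq_norm, Complex.normSq_apply]
  rw [hfuneq]
  set u : ℂ → ℝ := fun x => c * Real.log
      ((q.eval x).re * (q.eval x).re + (q.eval x).im * (q.eval x).im + C) with hu_def
  have hpos : ∀ y : ℂ, 0 < (q.eval y).re * (q.eval y).re + (q.eval y).im * (q.eval y).im + C :=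
    fun y => by nlinarith [sq_nonneg (q.eval y).re, sq_nonneg (q.eval y).im]
  -- ContDiff
  have hA2 : ContDiff ℝ 2 fun x : ℂ => q.eval x := (contDiff_eval q).of_le (by rw [← WithTop.coe_ofNat]; exact WithTop.coe_le_coe.mpr le_top)
  have hre2 : ContDiff ℝ 2 fun x : ℂ => (q.eval x).re := reCLM.contDiff.comp hA2
  have him2 : ContDiff ℝ 2 fun x : ℂ => (q.eval x).im := imCLM.contDiff.comp hA2
  have hh2 : ContDiff ℝ 2 fun x : ℂ =>
      (q.eval x).re * (q.eval x).re + (q.eval x).im * (q.eval x).im + C :=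
    ((hre2.mul hre2).add (him2.mul him2)).add contDiff_const
  have hu2 : ContDiff ℝ 2 u := contDiff_const.mul (hh2.log fun x => (hpos x).ne')
  have hdiff : Differentiable ℝ (fderiv ℝ u) :=
    (hu2.fderiv_right (m := 1) (by norm_num)).differentiable (by norm_num)
  -- second derivative in a direction v
  have key : ∀ v : ℂ, iteratedFDeriv ℝ 2 u z ![v, v] =
      fderiv ℝ (fun y => fderiv ℝ u y v) z v := by
    intro v
    rw [iteratedFDeriv_two_apply]
    simp only [Matrix.cons_val_zero, Matrix.cons_val_one, Matrix.head_cons]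
    have h1 : HasFDerivAt (fun y => fderiv ℝ u y v)
        ((fderiv ℝ (fderiv ℝ u) z).flip v) z := by
      have h2 := (hdiff z).hasFDerivAt.clm_apply (hasFDerivAt_const v z)
      simpa using h2
    rw [h1.fderiv, ContinuousLinearMap.flip_apply]
  have hGfun : ∀ v : ℂ, (fun y => fderiv ℝ u y v) = (fun y =>
      c * (2 * ((q.eval y).re * (v * q.derivative.eval y).re
        + (q.eval y).im * (v * q.derivative.eval y).im)) /
      ((q.eval y).re * (q.eval y).re + (q.eval y).im * (q.eval y).im + C)) :=
    fun v => funext fun y => fderiv_U_apply q hC c y v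
  unfold lap
  rw [key 1, key Complex.I, hGfun 1, hGfun Complex.I,
    fderiv_G_apply q hC c z 1, fderiv_G_apply q hC c z Complex.I]
  rw [Complex.sq_norm, Complex.sq_norm, Complex.normSq_apply, Complex.normSq_apply]
  have hden : ((q.eval z).re ^ 2 + (q.eval z).im ^ 2 + C) ≠ 0 := by positivity
  simp only [one_mul, Complex.mul_re, Complex.mul_im, Complex.I_re, Complex.I_im]
  rw [← add_div]
  rw [show ((q.eval z).re * (q.eval z).re + (q.eval z).im * (q.eval z).im + C)
      = ((q.eval z).re ^ 2 + (q.eval z).im ^ 2 + C) by ring]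
  rw [← mul_div_assoc, div_eq_div_iff (by positivity) (by positivity)]
  ring
open Polynomial Complex Finset

lemma eval_norm_le (p : Polynomial ℂ) {m : ℕ} (hm : p.natDegree ≤ m) {z : ℂ} (hz : 1 ≤ ‖z‖) :
    ‖p.eval z‖ ≤ (∑ i ∈ Finset.range (m + 1), ‖p.coeff i‖) * ‖z‖ ^ m := by
  rw [Polynomial.eval_eq_sum_range' (Nat.lt_succ_of_le hm)]
  refine (norm_sum_le _ _).trans ?_
  rw [Finset.sum_mul]
  refine Finset.sum_le_sum fun i hi => ?_
  rw [norm_mul, norm_pow]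
  exact mul_le_mul_of_nonneg_left
    (pow_le_pow_right₀ hz (Nat.le_of_lt_succ (Finset.mem_range.mp hi))) (norm_nonneg _)

set_option maxHeartbeats 1000000 in
lemma key_bound (q : Polynomial ℂ) (n : ℕ) (hn : 1 ≤ n) (hq : q.natDegree = n) :
    ∃ M : ℝ, 0 ≤ M ∧ ∀ z : ℂ, ‖q.derivative.eval z‖ ^ 2 ≤ M * (‖q.eval z‖ ^ 2 + 1) := by
  have hq0 : q ≠ 0 := fun h => by simp [h] at hq; omega
  set L : ℝ := ‖q.leadingCoeff‖ with hL
  have hLpos : 0 < L := norm_pos_iff.mpr (Polynomial.leadingCoeff_ne_zero.mpr hq0)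
  set E : ℝ := ∑ i ∈ Finset.range ((n - 1) + 1), ‖q.eraseLead.coeff i‖ with hE
  set D : ℝ := ∑ i ∈ Finset.range ((n - 1) + 1), ‖q.derivative.coeff i‖ with hD
  have hE0 : 0 ≤ E := Finset.sum_nonneg fun _ _ => norm_nonneg _
  have hD0 : 0 ≤ D := Finset.sum_nonneg fun _ _ => norm_nonneg _
  set R : ℝ := max 1 (2 * E / L + 1) with hR
  have hR1 : (1 : ℝ) ≤ R := le_max_left _ _
  -- bound on the compact ball
  obtain ⟨z₀, _, hz₀⟩ := (isCompact_closedBall (0 : ℂ) R).exists_isMaxOn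
    ⟨0, by simp [Metric.mem_closedBall]; linarith⟩
    ((q.derivative.continuous.norm.pow 2)).continuousOn
  refine ⟨max ((2 * D / L) ^ 2) (‖q.derivative.eval z₀‖ ^ 2), le_max_of_le_right (by positivity),
    fun z => ?_⟩
  rcases le_or_gt ‖z‖ R with hzR | hzR
  · have h1 : ‖q.derivative.eval z‖ ^ 2 ≤ ‖q.derivative.eval z₀‖ ^ 2 :=
      hz₀ (by simpa [Metric.mem_closedBall] using hzR)
    have h2 : (0:ℝ) ≤ ‖q.eval z‖ ^ 2 := by positivity
    calc ‖q.derivative.eval z‖ ^ 2 ≤ ‖q.derivative.eval z₀‖ ^ 2 := h1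
      _ ≤ max ((2 * D / L) ^ 2) (‖q.derivative.eval z₀‖ ^ 2) * 1 := by
          rw [mul_one]; exact le_max_right _ _
      _ ≤ _ := by
          apply mul_le_mul_of_nonneg_left (by linarith) (le_max_of_le_right (by positivity))
  · -- large |z|
    have hz1 : 1 ≤ ‖z‖ := le_trans hR1 hzR.le
    have hzpos : (0:ℝ) < ‖z‖ := lt_of_lt_of_le one_pos hz1
    -- upper bound for derivative
    have hder : ‖q.derivative.eval z‖ ≤ D * ‖z‖ ^ (n - 1) := by
      refine eval_norm_le q.derivative ?_ hz1
      have := Polynomial.natDegree_derivative_le q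
      omega
    -- lower bound for q
    have hlow : L * ‖z‖ ^ n - E * ‖z‖ ^ (n - 1) ≤ ‖q.eval z‖ := by
      have hdecomp : q.eval z = q.eraseLead.eval z + q.leadingCoeff * z ^ n := by
        conv_lhs => rw [← Polynomial.eraseLead_add_C_mul_X_pow q]
        simp [hq]
      have hel : ‖q.eraseLead.eval z‖ ≤ E * ‖z‖ ^ (n - 1) := by
        refine eval_norm_le q.eraseLead ?_ hz1
        have := Polynomial.eraseLead_natDegree_le q
        omega
      rw [hdecomp, add_comm]
      have key := norm_add_le (q.leadingCoeff * z ^ n + q.eraseLead.eval z)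
        (-(q.eraseLead.eval z))
      rw [add_neg_cancel_right, norm_neg] at key
      have hnorm : ‖q.leadingCoeff * z ^ n‖ = L * ‖z‖ ^ n := by rw [norm_mul, norm_pow]
      linarith [hel, key]
    -- |z| ≥ 2E/L + 1
    have hzE : 2 * E / L + 1 ≤ ‖z‖ := le_trans (le_max_right _ _) hzR.le
    have hq_lb : L / 2 * ‖z‖ ^ (n - 1) ≤ ‖q.eval z‖ := by
      have hpow : ‖z‖ ^ n = ‖z‖ ^ (n - 1) * ‖z‖ := by
        rw [← pow_succ]; congr 1; omega
      have hpow_pos : (0:ℝ) < ‖z‖ ^ (n - 1) := by positivity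
      have : L / 2 * ‖z‖ ^ (n - 1) ≤ L * ‖z‖ ^ n - E * ‖z‖ ^ (n - 1) := by
        rw [hpow]
        have hLz : 2 * E / L ≤ ‖z‖ - 1 := by linarith
        have : 2 * E ≤ L * (‖z‖ - 1) := by
          rw [div_le_iff₀ hLpos] at hLz; linarith [hLz]
        nlinarith [hpow_pos, hLpos, hz1]
      linarith
    have hfinal : ‖q.derivative.eval z‖ ≤ 2 * D / L * ‖q.eval z‖ := by
      have h3 : 2 * D / L * (L / 2 * ‖z‖ ^ (n - 1)) = D * ‖z‖ ^ (n - 1) := by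
        field_simp
      have h4 := mul_le_mul_of_nonneg_left hq_lb (show (0:ℝ) ≤ 2 * D / L from div_nonneg (by linarith) hLpos.le)
      linarith [hder, h4]
    have h2 : ‖q.derivative.eval z‖ ^ 2 ≤ (2 * D / L) ^ 2 * ‖q.eval z‖ ^ 2 := by
      rw [← mul_pow]
      exact pow_le_pow_left₀ (norm_nonneg _) hfinal 2
    calc ‖q.derivative.eval z‖ ^ 2 ≤ (2 * D / L) ^ 2 * ‖q.eval z‖ ^ 2 := h2
      _ ≤ max ((2 * D / L) ^ 2) (‖q.derivative.eval z₀‖ ^ 2) * (‖q.eval z‖ ^ 2 + 1) := by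
          apply mul_le_mul (le_max_left _ _) (by linarith) (by positivity)
            (le_max_of_le_left (sq_nonneg _))

lemma alg_ineqs {x s C : ℝ} (hx : 0 ≤ x) (hs : 0 ≤ s) (hC : 0 < C)
    (hsb : s ≤ 2 * (x + C) ^ ((5:ℝ)/4)) :
    (3/8) * s * C ≤ (x + C) ^ ((19:ℝ)/8) * (x + 3*C) ^ (-(1:ℝ)/8)
        - (x + C) ^ ((5:ℝ)/4) * x ∧
    (3/8) * s * C ≤ (x + 3*C) ^ ((9:ℝ)/4)
        - (x + C) ^ ((3:ℝ)/8) * (x + 3*C) ^ ((15:ℝ)/8) := by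
  have ha : (0:ℝ) < x + C := by linarith
  have hb : (0:ℝ) < x + 3*C := by linarith
  set P : ℝ := (x + C) ^ ((5:ℝ)/4) with hP
  set Pb : ℝ := (x + 3*C) ^ ((5:ℝ)/4) with hPb
  have hPpos : 0 < P := Real.rpow_pos_of_pos ha _
  have hPbpos : 0 < Pb := Real.rpow_pos_of_pos hb _
  have hPPb : P ≤ Pb := Real.rpow_le_rpow ha.le (by linarith) (by norm_num)
  have hsC : (3/8) * s * C ≤ (3/4) * C * P := by
    have h := mul_le_mul_of_nonneg_left hsb (show (0:ℝ) ≤ 3/8 * C by linarith)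
    nlinarith
  constructor
  · -- first inequality
    have g1 : (x + 3*C/4) ^ ((8:ℝ)/9) * (x + 3*C) ^ ((1:ℝ)/9) ≤ x + C := by
      have h := Real.geom_mean_le_arith_mean2_weighted
        (by norm_num : (0:ℝ) ≤ 8/9) (by norm_num : (0:ℝ) ≤ 1/9)
        (by linarith : (0:ℝ) ≤ x + 3*C/4) (by linarith : (0:ℝ) ≤ x + 3*C) (by norm_num)
      calc (x + 3*C/4) ^ ((8:ℝ)/9) * (x + 3*C) ^ ((1:ℝ)/9)
          ≤ 8/9 * (x + 3*C/4) + 1/9 * (x + 3*C) := h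
        _ = x + C := by ring
    have g3 : (x + 3*C/4) * (x + 3*C) ^ ((1:ℝ)/8) ≤ (x + C) ^ ((9:ℝ)/8) := by
      have h2 := Real.rpow_le_rpow (by positivity) g1 (by norm_num : (0:ℝ) ≤ 9/8)
      rw [Real.mul_rpow (by positivity) (by positivity),
        ← Real.rpow_mul (by linarith), ← Real.rpow_mul (by linarith)] at h2
      norm_num at h2
      exact h2
    have mul1 : (x + 3*C/4) * P ≤ (x + C) ^ ((19:ℝ)/8) * (x + 3*C) ^ (-(1:ℝ)/8) := by
      have h3 := mul_le_mul_of_nonneg_right g3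
        (show (0:ℝ) ≤ P * (x + 3*C) ^ (-(1:ℝ)/8) by positivity)
      have e1 : (x + 3*C) ^ ((1:ℝ)/8) * (x + 3*C) ^ (-(1:ℝ)/8) = 1 := by
        rw [← Real.rpow_add hb]; norm_num
      have e2 : (x + C) ^ ((9:ℝ)/8) * P = (x + C) ^ ((19:ℝ)/8) := by
        rw [hP, ← Real.rpow_add ha]; norm_num
      calc (x + 3*C/4) * P
          = (x + 3*C/4) * (x + 3*C) ^ ((1:ℝ)/8) * (P * (x + 3*C) ^ (-(1:ℝ)/8)) := by
            rw [show (x + 3*C/4) * (x + 3*C) ^ ((1:ℝ)/8) * (P * (x + 3*C) ^ (-(1:ℝ)/8))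
              = (x + 3*C/4) * P * ((x + 3*C) ^ ((1:ℝ)/8) * (x + 3*C) ^ (-(1:ℝ)/8)) by ring,
              e1, mul_one]
        _ ≤ (x + C) ^ ((9:ℝ)/8) * (P * (x + 3*C) ^ (-(1:ℝ)/8)) := h3
        _ = (x + C) ^ ((19:ℝ)/8) * (x + 3*C) ^ (-(1:ℝ)/8) := by
            rw [← mul_assoc, e2]
    nlinarith [mul1, hsC]
  · -- second inequality
    have g5 : (x + C) ^ ((3:ℝ)/8) * (x + 3*C) ^ ((5:ℝ)/8) ≤ x + 9*C/4 := by
      have h := Real.geom_mean_le_arith_mean2_weighted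
        (by norm_num : (0:ℝ) ≤ 3/8) (by norm_num : (0:ℝ) ≤ 5/8)
        ha.le hb.le (by norm_num)
      calc (x + C) ^ ((3:ℝ)/8) * (x + 3*C) ^ ((5:ℝ)/8)
          ≤ 3/8 * (x + C) + 5/8 * (x + 3*C) := h
        _ = x + 9*C/4 := by ring
    have mul2 : (x + C) ^ ((3:ℝ)/8) * (x + 3*C) ^ ((15:ℝ)/8) ≤ (x + 9*C/4) * Pb := by
      have h3 := mul_le_mul_of_nonneg_right g5 hPbpos.le
      have e3 : (x + 3*C) ^ ((5:ℝ)/8) * Pb = (x + 3*C) ^ ((15:ℝ)/8) := by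
        rw [hPb, ← Real.rpow_add hb]; norm_num
      calc (x + C) ^ ((3:ℝ)/8) * (x + 3*C) ^ ((15:ℝ)/8)
          = (x + C) ^ ((3:ℝ)/8) * (x + 3*C) ^ ((5:ℝ)/8) * Pb := by
            rw [mul_assoc, e3]
        _ ≤ (x + 9*C/4) * Pb := h3
    have e4 : (x + 3*C) ^ ((9:ℝ)/4) = (x + 3*C) * Pb := by
      rw [hPb, show (9:ℝ)/4 = 1 + 5/4 by norm_num,
        Real.rpow_one_add' hb.le (by norm_num)]
    nlinarith [mul2, hsC, hPPb]

/-- **Existence of a global supersolution.** For a complex polynomial `q` of degree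
`n ≥ 1` there is `C > 1` such that `((3/8) log(|q|²+C), (1/8) log(|q|²+3C))` is a
supersolution of the planar Hitchin system associated to `q` on all of `ℂ`;
equivalently, the two algebraic inequalities involving `|q'|²` hold everywhere. -/
theorem stmt_2 (q : Polynomial ℂ) (n : ℕ) (hn : 1 ≤ n) (hq : q.natDegree = n) :
    ∃ C : ℝ, 1 < C ∧
      (∀ z : ℂ,
        lap (uSup1 q C) z ≤
            Real.exp (uSup1 q C z - uSup2 q C z) -
              Real.exp (-2 * uSup1 q C z) * ‖q.eval z‖ ^ 2 ∧
        lap (uSup2 q C) z ≤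
            Real.exp (2 * uSup2 q C z) - Real.exp (uSup1 q C z - uSup2 q C z)) ∧
      (∀ z : ℂ,
        (3 / 8) * ‖q.derivative.eval z‖ ^ 2 * C ≤
            (‖q.eval z‖ ^ 2 + C) ^ ((19 : ℝ) / 8) *
                (‖q.eval z‖ ^ 2 + 3 * C) ^ (-(1 : ℝ) / 8) -
              (‖q.eval z‖ ^ 2 + C) ^ ((5 : ℝ) / 4) *
                ‖q.eval z‖ ^ 2 ∧
        (3 / 8) * ‖q.derivative.eval z‖ ^ 2 * C ≤
            (‖q.eval z‖ ^ 2 + 3 * C) ^ ((9 : ℝ) / 4) -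
              (‖q.eval z‖ ^ 2 + C) ^ ((3 : ℝ) / 8) *
                (‖q.eval z‖ ^ 2 + 3 * C) ^ ((15 : ℝ) / 8)) := by
  obtain ⟨M, hM0, hMb⟩ := key_bound q n hn hq
  set C : ℝ := max 2 ((M / 2) ^ 4) with hCdef
  have hC2 : (2:ℝ) ≤ C := le_max_left _ _
  have hC0 : (0:ℝ) < C := by linarith
  have hC1 : (1:ℝ) < C := by linarith
  -- the two algebraic inequalities, together with the growth bound
  have halg : ∀ z : ℂ,
      (3 / 8) * ‖q.derivative.eval z‖ ^ 2 * C ≤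
          (‖q.eval z‖ ^ 2 + C) ^ ((19 : ℝ) / 8) *
              (‖q.eval z‖ ^ 2 + 3 * C) ^ (-(1 : ℝ) / 8) -
            (‖q.eval z‖ ^ 2 + C) ^ ((5 : ℝ) / 4) *
              ‖q.eval z‖ ^ 2 ∧
      (3 / 8) * ‖q.derivative.eval z‖ ^ 2 * C ≤
          (‖q.eval z‖ ^ 2 + 3 * C) ^ ((9 : ℝ) / 4) -
            (‖q.eval z‖ ^ 2 + C) ^ ((3 : ℝ) / 8) *
              (‖q.eval z‖ ^ 2 + 3 * C) ^ ((15 : ℝ) / 8) := by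
    intro z
    set x : ℝ := ‖q.eval z‖ ^ 2 with hxdef
    set s : ℝ := ‖q.derivative.eval z‖ ^ 2 with hsdef
    have hx : 0 ≤ x := by positivity
    have hs : 0 ≤ s := by positivity
    have hxC : (0:ℝ) < x + C := by linarith
    have hsb : s ≤ 2 * (x + C) ^ ((5:ℝ)/4) := by
      have h1 : s ≤ M * (x + 1) := by
        simpa [hsdef, hxdef] using hMb z
      have hC14 : M / 2 ≤ C ^ ((1:ℝ)/4) := by
        have e : ((M/2) ^ 4 : ℝ) ^ ((1:ℝ)/4) = M / 2 := by
          rw [← Real.rpow_natCast (M/2) 4, ← Real.rpow_mul (by positivity)]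
          norm_num
        calc M / 2 = ((M/2) ^ 4 : ℝ) ^ ((1:ℝ)/4) := e.symm
          _ ≤ C ^ ((1:ℝ)/4) :=
            Real.rpow_le_rpow (by positivity) (le_max_right _ _) (by norm_num)
      have h2 : M * (x + 1) ≤ 2 * C ^ ((1:ℝ)/4) * (x + 1) :=
        mul_le_mul_of_nonneg_right (by linarith) (by linarith)
      have h3 : 2 * C ^ ((1:ℝ)/4) * (x + 1) ≤ 2 * (x + C) ^ ((1:ℝ)/4) * (x + C) := by
        have e1 : C ^ ((1:ℝ)/4) ≤ (x + C) ^ ((1:ℝ)/4) :=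
          Real.rpow_le_rpow hC0.le (by linarith) (by norm_num)
        have e0 : (0:ℝ) ≤ C ^ ((1:ℝ)/4) := by positivity
        apply mul_le_mul (by linarith) (by linarith) (by linarith) (by positivity)
      have h4 : 2 * (x + C) ^ ((1:ℝ)/4) * (x + C) = 2 * (x + C) ^ ((5:ℝ)/4) := by
        rw [show (5:ℝ)/4 = 1/4 + 1 by norm_num, Real.rpow_add hxC, Real.rpow_one]
        ring
      linarith
    exact alg_ineqs hx hs hC0 hsb
  refine ⟨C, hC1, fun z => ?_, halg⟩
  obtain ⟨alg1, alg2⟩ := halg z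
  set x : ℝ := ‖q.eval z‖ ^ 2 with hxdef
  set s : ℝ := ‖q.derivative.eval z‖ ^ 2 with hsdef
  have hx : 0 ≤ x := by positivity
  have hs : 0 ≤ s := by positivity
  have hxC : (0:ℝ) < x + C := by linarith
  have hx3C : (0:ℝ) < x + 3 * C := by linarith
  -- exponential identities
  have E1 : Real.exp (uSup1 q C z - uSup2 q C z)
      = (x + C) ^ ((3:ℝ)/8) * (x + 3*C) ^ (-(1:ℝ)/8) := by
    rw [Real.exp_sub]
    have e1 : Real.exp (uSup1 q C z) = (x + C) ^ ((3:ℝ)/8) := by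
      rw [uSup1, Real.rpow_def_of_pos hxC]
      congr 1
      ring
    have e2 : Real.exp (uSup2 q C z) = (x + 3*C) ^ ((1:ℝ)/8) := by
      rw [uSup2, Real.rpow_def_of_pos hx3C]
      congr 1
      ring
    rw [e1, e2, show -(1:ℝ)/8 = -((1:ℝ)/8) by norm_num, Real.rpow_neg hx3C.le,
      div_eq_mul_inv]
  have E2 : Real.exp (-2 * uSup1 q C z) = (x + C) ^ (-(3:ℝ)/4) := by
    rw [uSup1, Real.rpow_def_of_pos hxC]
    congr 1
    ring
  have E3 : Real.exp (2 * uSup2 q C z) = (x + 3*C) ^ ((1:ℝ)/4) := by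
    rw [uSup2, Real.rpow_def_of_pos hx3C]
    congr 1
    ring
  have hsq : ((x + C):ℝ) ^ 2 = (x + C) ^ ((2:ℝ)) := by
    rw [← Real.rpow_natCast (x + C) 2]; norm_num
  have hsqb : ((x + 3*C):ℝ) ^ 2 = (x + 3*C) ^ ((2:ℝ)) := by
    rw [← Real.rpow_natCast (x + 3*C) 2]; norm_num
  constructor
  · -- first PDE inequality
    have hlap : lap (uSup1 q C) z = (3/8) * C * s / (x + C) ^ 2 := by
      have h := lap_log q hC0 (3/8) z
      rw [show uSup1 q C = fun y => (3/8) * Real.log (‖q.eval y‖ ^ 2 + C)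
        from rfl]
      exact h
    rw [hlap, E1, E2]
    have div1 : ((x + C) ^ ((19:ℝ)/8) * (x + 3*C) ^ (-(1:ℝ)/8)
          - (x + C) ^ ((5:ℝ)/4) * x) / (x + C) ^ 2
        = (x + C) ^ ((3:ℝ)/8) * (x + 3*C) ^ (-(1:ℝ)/8) - (x + C) ^ (-(3:ℝ)/4) * x := by
      rw [sub_div, hsq, mul_div_right_comm, mul_div_right_comm,
        ← Real.rpow_sub hxC, ← Real.rpow_sub hxC]
      norm_num
    rw [← div1]
    apply div_le_div_of_nonneg_right ?_ (by positivity)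
    linarith [alg1]
  · -- second PDE inequality
    have hlap : lap (uSup2 q C) z = (1/8) * (3*C) * s / (x + 3*C) ^ 2 := by
      have h := lap_log q (show (0:ℝ) < 3*C by linarith) (1/8) z
      rw [show uSup2 q C = fun y => (1/8) * Real.log (‖q.eval y‖ ^ 2 + 3*C)
        from rfl]
      exact h
    rw [hlap, E1, E3]
    have div2 : ((x + 3*C) ^ ((9:ℝ)/4)
          - (x + C) ^ ((3:ℝ)/8) * (x + 3*C) ^ ((15:ℝ)/8)) / (x + 3*C) ^ 2
        = (x + 3*C) ^ ((1:ℝ)/4)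
          - (x + C) ^ ((3:ℝ)/8) * (x + 3*C) ^ (-(1:ℝ)/8) := by
      rw [sub_div, hsqb, mul_div_assoc, ← Real.rpow_sub hx3C, ← Real.rpow_sub hx3C]
      norm_num
    rw [← div2]
    apply div_le_div_of_nonneg_right ?_ (by positivity)
    linarith [alg2]
end

section
/- Let q be a complex polynomial of degree n ≥ 1 and let (u₁, u₂) be a smooth solution on ℂ of the planar Hitchin system associated to q satisfying (3/8) log|q|² ≤ u₁ ≤ (3/8) log(|q|² + C) and (1/8) log|q|² ≤ u₂ ≤ (1/8) log(|q|² + 3C) for some C > 0. Then there exist constants A, R > 0 and an exponent α > 1 (one may take α = 8n/(n+4)) such that for every p ∈ ℂ with r(p) > R one has 0 ≤ u₁(p) − (3/8) log|q(p)|² ≤ A·r(p)^{−α} and 0 ≤ u₂(p) − (1/8) log|q(p)|² ≤ A·r(p)^{−α}. -/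
open Polynomial

private lemma ms_abs_prod (s : Multiset ℂ) :
    ‖s.prod‖ = (s.map (fun z => ‖z‖)).prod := by
  induction s using Multiset.induction with
  | empty => simp
  | cons a s ih => simp [norm_mul, ih]

private lemma ms_prod_nonneg {s : Multiset ℂ} {f : ℂ → ℝ}
    (h : ∀ z ∈ s, 0 ≤ f z) : 0 ≤ (s.map f).prod := by
  apply Multiset.prod_nonneg
  intro x hx
  obtain ⟨z, hz, rfl⟩ := Multiset.mem_map.mp hx
  exact h z hz

private lemma ms_prod_le {s : Multiset ℂ} {f g : ℂ → ℝ}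
    (h : ∀ z ∈ s, 0 ≤ f z ∧ f z ≤ g z) :
    (s.map f).prod ≤ (s.map g).prod := by
  induction s using Multiset.induction with
  | empty => simp
  | cons a s ih =>
    simp only [Multiset.map_cons, Multiset.prod_cons]
    have ha := h a (Multiset.mem_cons_self a s)
    have h' : ∀ z ∈ s, 0 ≤ f z ∧ f z ≤ g z := fun z hz => h z (Multiset.mem_cons_of_mem hz)
    have hf : 0 ≤ (s.map f).prod := ms_prod_nonneg fun z hz => (h' z hz).1
    exact mul_le_mul ha.2 (ih h') hf (le_trans ha.1 ha.2)

private lemma eval_abs_eq (q : Polynomial ℂ) (hc : q.roots.card = q.natDegree) (w : ℂ) :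
    ‖q.eval w‖
      = ‖q.leadingCoeff‖ * ((q.roots.map fun z => ‖w - z‖).prod) := by
  conv_lhs => rw [← Polynomial.C_leadingCoeff_mul_prod_multiset_X_sub_C hc]
  rw [Polynomial.eval_mul, Polynomial.eval_C, norm_mul, Polynomial.eval_multiset_prod,
    Multiset.map_map, ms_abs_prod, Multiset.map_map]
  simp

/-- The `|q|^{1/2}`-distance from `p` to the zero set of `q`: the infimum of
`∫₀¹ |q(γ(t))|^{1/2} |γ'(t)| dt` over `C¹` paths `γ` from `p` to a zero of `q`. -/
noncomputable def qdist (q : Polynomial ℂ) (p : ℂ) : ℝ :=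
  sInf {L : ℝ | ∃ γ : ℝ → ℂ, ContDiffOn ℝ 1 γ (Set.Icc 0 1) ∧ γ 0 = p ∧
    q.eval (γ 1) = 0 ∧
    L = ∫ t in (0 : ℝ)..1,
      Real.sqrt (‖q.eval (γ t)‖) * ‖deriv γ t‖}

private lemma key_estimate (q : Polynomial ℂ) (n : ℕ) (hn : 1 ≤ n) (hq : q.natDegree = n) (p : ℂ)
    (hcard : q.roots.card = n) (hq0 : q ≠ 0) (hr : 1 < qdist q p) :
    q.eval p ≠ 0 ∧ (qdist q p) ^ (2*n) ≤ (2 ^ (n*n) / (‖q.leadingCoeff‖)^2)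
      * (‖q.eval p‖) ^ (n + 2) := by
  classical
  set S := {L : ℝ | ∃ γ : ℝ → ℂ, ContDiffOn ℝ 1 γ (Set.Icc 0 1) ∧ γ 0 = p ∧
    q.eval (γ 1) = 0 ∧
    L = ∫ t in (0 : ℝ)..1,
      Real.sqrt (‖q.eval (γ t)‖) * ‖deriv γ t‖} with hS
  have set_nonneg : ∀ L ∈ S, (0:ℝ) ≤ L := by
    rintro L ⟨γ, hγ, h0, h1, rfl⟩
    apply intervalIntegral.integral_nonneg zero_le_one
    intro t ht
    positivity
  have hbdd : BddBelow S := ⟨0, set_nonneg⟩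
  have hqd_le : ∀ L ∈ S, qdist q p ≤ L := fun L hL => csInf_le hbdd hL
  -- q(p) ≠ 0
  have hqp : q.eval p ≠ 0 := by
    intro h
    have h0 : (0:ℝ) ∈ S := by
      refine ⟨fun _ => p, contDiffOn_const, rfl, h, ?_⟩
      simp
    have := hqd_le 0 h0
    linarith
  set Q := ‖q.eval p‖ with hQdef
  have hQ0 : 0 < Q := by simpa [hQdef] using (norm_pos_iff.mpr hqp)
  have ha0 : 0 < ‖q.leadingCoeff‖ :=
    norm_pos_iff.mpr (Polynomial.leadingCoeff_ne_zero.mpr hq0)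
  set a := ‖q.leadingCoeff‖ with hadef
  -- choose nearest root
  have hroots_ne : q.roots.toFinset.Nonempty := by
    rw [Finset.nonempty_iff_ne_empty]
    intro h
    have : q.roots = 0 := by
      simpa [Multiset.toFinset_eq_empty] using h
    rw [this] at hcard
    simp at hcard
    omega
  obtain ⟨z₀, hz₀mem', hz₀min'⟩ :=
    Finset.exists_min_image q.roots.toFinset (fun z => ‖p - z‖) hroots_ne
  have hz₀mem : z₀ ∈ q.roots := Multiset.mem_toFinset.mp hz₀mem'
  have hz₀min : ∀ z ∈ q.roots, ‖p - z₀‖ ≤ ‖p - z‖ :=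
    fun z hz => hz₀min' z (Multiset.mem_toFinset.mpr hz)
  set d := ‖p - z₀‖ with hddef
  have hd0 : 0 ≤ d := norm_nonneg _
  -- the straight path
  set γ : ℝ → ℂ := fun t => p + (t:ℂ) * (z₀ - p) with hγdef
  have hγderiv : ∀ t : ℝ, HasDerivAt γ (z₀ - p) t := by
    intro t
    have h1 : HasDerivAt (fun t : ℝ => (t:ℂ)) 1 t := by
      simpa using (hasDerivAt_id t).ofReal_comp
    simpa [hγdef] using (h1.mul_const (z₀ - p)).const_add p
  have hγsm : ContDiffOn ℝ 1 γ (Set.Icc 0 1) := by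
    apply ContDiff.contDiffOn
    exact contDiff_const.add ((Complex.ofRealCLM.contDiff).mul contDiff_const)
  -- bound |q(γ t)| for t ∈ [0,1]
  have habs : ∀ t ∈ Set.Icc (0:ℝ) 1, ‖q.eval (γ t)‖ ≤ 2 ^ n * Q := by
    intro t ht
    have heval := eval_abs_eq q (hq ▸ hcard) (γ t)
    have hevalp := eval_abs_eq q (hq ▸ hcard) p
    rw [heval]
    have hterm : ∀ z ∈ q.roots, 0 ≤ ‖γ t - z‖ ∧
        ‖γ t - z‖ ≤ 2 * ‖p - z‖ := by
      intro z hz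
      refine ⟨norm_nonneg _, ?_⟩
      have h1 : γ t - z = (p - z) + (t:ℂ) * (z₀ - p) := by ring
      have h2 : ‖γ t - z‖ ≤ ‖p - z‖ + ‖(t:ℂ)‖ * ‖z₀ - p‖ := by
        rw [h1]
        refine le_trans (norm_add_le _ _) ?_
        rw [norm_mul]
      have h3 : ‖(t:ℂ)‖ ≤ 1 := by
        rw [Complex.norm_of_nonneg ht.1]; exact ht.2
      have h4 : ‖z₀ - p‖ = d := by
        rw [hddef, norm_sub_rev]
      have h5 : d ≤ ‖p - z‖ := hz₀min z hz
      nlinarith [norm_nonneg (z₀ - p), norm_nonneg (p - z)]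
    have hle := ms_prod_le hterm
    have h2n : (q.roots.map fun z => 2 * ‖p - z‖).prod
        = 2 ^ n * (q.roots.map fun z => ‖p - z‖).prod := by
      rw [show (fun z => 2 * ‖p - z‖) = (fun z => (fun _ => (2:ℝ)) z * (fun z => ‖p - z‖) z) from rfl]
      rw [Multiset.prod_map_mul]
      congr 1
      rw [Multiset.map_const', Multiset.prod_replicate, hcard]
    calc a * (q.roots.map fun z => ‖γ t - z‖).prod
        ≤ a * (q.roots.map fun z => 2 * ‖p - z‖).prod :=
          mul_le_mul_of_nonneg_left hle ha0.le
      _ = 2 ^ n * (a * (q.roots.map fun z => ‖p - z‖).prod) := by rw [h2n]; ring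
      _ = 2 ^ n * Q := by rw [hQdef, hevalp]
  -- the straight-path element of S
  have hγ1 : γ 1 = z₀ := by simp [hγdef]
  have hmem : (∫ t in (0:ℝ)..1,
      Real.sqrt (‖q.eval (γ t)‖) * ‖deriv γ t‖) ∈ S := by
    refine ⟨γ, hγsm, by simp [hγdef], ?_, rfl⟩
    rw [hγ1]
    exact Polynomial.isRoot_of_mem_roots hz₀mem
  have hderiv_eq : (fun t => Real.sqrt (‖q.eval (γ t)‖) * ‖deriv γ t‖)
      = fun t => Real.sqrt (‖q.eval (γ t)‖) * d := by
    funext t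
    rw [(hγderiv t).deriv, hddef, norm_sub_rev]
  have hγcont : Continuous γ :=
    continuous_const.add (Complex.continuous_ofReal.mul continuous_const)
  have hcont : Continuous fun t => Real.sqrt (‖q.eval (γ t)‖) * d :=
    (Real.continuous_sqrt.comp (continuous_norm.comp (q.continuous.comp hγcont))).mul
      continuous_const
  have hint : (∫ t in (0:ℝ)..1, Real.sqrt (‖q.eval (γ t)‖) * d)
      ≤ Real.sqrt (2 ^ n * Q) * d := by
    have hmono := intervalIntegral.integral_mono_on (f := fun t =>
        Real.sqrt (‖q.eval (γ t)‖) * d)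
      (g := fun _ => Real.sqrt (2 ^ n * Q) * d) zero_le_one
      (hcont.intervalIntegrable 0 1) (intervalIntegrable_const (μ := MeasureTheory.volume))
      (fun t ht => mul_le_mul_of_nonneg_right (Real.sqrt_le_sqrt (habs t ht)) hd0)
    simpa using hmono
  have hqd2 : qdist q p ≤ Real.sqrt (2 ^ n * Q) * d := by
    refine le_trans (hqd_le _ hmem) ?_
    rw [show (∫ t in (0:ℝ)..1,
        Real.sqrt (‖q.eval (γ t)‖) * ‖deriv γ t‖)
        = ∫ t in (0:ℝ)..1, Real.sqrt (‖q.eval (γ t)‖) * d from by rw [hderiv_eq]]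
    exact hint
  -- bound d^n
  have hdn : d ^ n ≤ Q / a := by
    have h1 : ((q.roots.map fun (_ : ℂ) => d).prod : ℝ)
        ≤ (q.roots.map fun z => ‖p - z‖).prod :=
      ms_prod_le (fun z hz => ⟨hd0, hz₀min z hz⟩)
    rw [Multiset.map_const', Multiset.prod_replicate, hcard] at h1
    have hevalp := eval_abs_eq q (hq ▸ hcard) p
    rw [le_div_iff₀ ha0]
    calc d ^ n * a ≤ (q.roots.map fun z => ‖p - z‖).prod * a :=
          mul_le_mul_of_nonneg_right h1 ha0.le
      _ = Q := by rw [hQdef, hevalp]; ring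
  -- final nat-power estimate
  have hr0 : (0:ℝ) ≤ qdist q p := le_trans zero_le_one hr.le
  have hM0 : (0:ℝ) ≤ 2 ^ n * Q := by positivity
  refine ⟨hqp, ?_⟩
  calc (qdist q p) ^ (2*n) ≤ (Real.sqrt (2 ^ n * Q) * d) ^ (2*n) :=
        pow_le_pow_left₀ hr0 hqd2 (2*n)
    _ = ((Real.sqrt (2 ^ n * Q)) ^ 2) ^ n * (d ^ n) ^ 2 := by
        rw [mul_pow, ← pow_mul, ← pow_mul]
        ring_nf
    _ = (2 ^ n * Q) ^ n * (d ^ n) ^ 2 := by rw [Real.sq_sqrt hM0]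
    _ ≤ (2 ^ n * Q) ^ n * (Q / a) ^ 2 := by
        refine mul_le_mul_of_nonneg_left ?_ (by positivity)
        exact pow_le_pow_left₀ (pow_nonneg hd0 n) hdn 2
    _ = (2 ^ (n*n) / a ^ 2) * Q ^ (n + 2) := by
        rw [mul_pow, ← pow_mul, pow_add]
        field_simp


/-- **Decay of the solution towards the flat solution.** If `(u₁,u₂)` solves the planar
Hitchin system associated to `q` of degree `n ≥ 1` and lies between the sub- and
supersolutions, then there are `A, R > 0` and `α > 1` so that at every point whose
`|q|^{1/2}`-distance `r` from the zeros of `q` exceeds `R`, the errors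
`u₁ − (3/8) log|q|²` and `u₂ − (1/8) log|q|²` lie in `[0, A r^{−α}]`. -/
theorem stmt_5 (q : Polynomial ℂ) (n : ℕ) (hn : 1 ≤ n) (hq : q.natDegree = n)
    (C : ℝ) (hC : 0 < C) (u₁ u₂ : ℂ → ℝ)
    (hsm₁ : ContDiff ℝ (⊤ : ℕ∞) u₁) (hsm₂ : ContDiff ℝ (⊤ : ℕ∞) u₂)
    (hsol : ∀ z : ℂ,
      lap u₁ z =
          Real.exp (u₁ z - u₂ z) -
            Real.exp (-2 * u₁ z) * ‖q.eval z‖ ^ 2 ∧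
      lap u₂ z = Real.exp (2 * u₂ z) - Real.exp (u₁ z - u₂ z))
    (hlow : ∀ z : ℂ, q.eval z ≠ 0 →
      (3 / 8) * Real.log (‖q.eval z‖ ^ 2) ≤ u₁ z ∧
      (1 / 8) * Real.log (‖q.eval z‖ ^ 2) ≤ u₂ z)
    (hup : ∀ z : ℂ,
      u₁ z ≤ (3 / 8) * Real.log (‖q.eval z‖ ^ 2 + C) ∧
      u₂ z ≤ (1 / 8) * Real.log (‖q.eval z‖ ^ 2 + 3 * C)) :
    ∃ A R α : ℝ, 0 < A ∧ 0 < R ∧ 1 < α ∧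
      ∀ p : ℂ, R < qdist q p →
        (0 ≤ u₁ p - (3 / 8) * Real.log (‖q.eval p‖ ^ 2) ∧
          u₁ p - (3 / 8) * Real.log (‖q.eval p‖ ^ 2) ≤
            A * (qdist q p) ^ (-α)) ∧
        (0 ≤ u₂ p - (1 / 8) * Real.log (‖q.eval p‖ ^ 2) ∧
          u₂ p - (1 / 8) * Real.log (‖q.eval p‖ ^ 2) ≤
            A * (qdist q p) ^ (-α)) := by
  classical
  have hq0 : q ≠ 0 := by
    intro h
    rw [h, Polynomial.natDegree_zero] at hq
    omega
  have hcard : q.roots.card = n := by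
    rw [← hq]
    exact Polynomial.splits_iff_card_roots.mp (IsAlgClosed.splits q)
  have ha0 : 0 < ‖q.leadingCoeff‖ :=
    norm_pos_iff.mpr (Polynomial.leadingCoeff_ne_zero.mpr hq0)
  set a := ‖q.leadingCoeff‖ with hadef
  set e : ℝ := 2 / ((n:ℝ) + 2) with hedef
  set α : ℝ := 4 * (n:ℝ) / ((n:ℝ) + 2) with hαdef
  set c₁ : ℝ := 2 ^ (n*n) / a ^ 2 with hc₁def
  have hc₁0 : 0 < c₁ := by positivity
  set c₂ : ℝ := c₁ ^ e with hc₂def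
  have hc₂0 : 0 < c₂ := Real.rpow_pos_of_pos hc₁0 e
  have hn1 : (1:ℝ) ≤ (n:ℝ) := by exact_mod_cast hn
  have hne : (0:ℝ) < (n:ℝ) + 2 := by linarith
  refine ⟨3/8 * C * c₂, 1, α, by positivity, one_pos, ?_, ?_⟩
  · rw [hαdef, lt_div_iff₀ hne]
    linarith
  intro p hr
  obtain ⟨hqp, hkey⟩ := key_estimate q n hn hq p hcard hq0 hr
  set Q := ‖q.eval p‖ with hQdef
  have hQ0 : 0 < Q := norm_pos_iff.mpr hqp
  have hr0 : (0:ℝ) ≤ qdist q p := le_trans zero_le_one hr.le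
  have hr1 : (0:ℝ) < qdist q p := lt_trans one_pos hr
  -- rpow step
  have he0 : (0:ℝ) < e := by rw [hedef]; positivity
  have h1 : (((qdist q p) ^ (2*n) : ℝ)) ^ e ≤ (c₁ * Q ^ (n+2)) ^ e :=
    Real.rpow_le_rpow (by positivity) hkey he0.le
  rw [← Real.rpow_natCast (qdist q p) (2*n), ← Real.rpow_mul hr0,
    Real.mul_rpow hc₁0.le (by positivity), ← Real.rpow_natCast Q (n+2),
    ← Real.rpow_mul hQ0.le] at h1
  have hex1 : ((2*n : ℕ):ℝ) * e = α := by
    rw [hedef, hαdef]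
    push_cast
    field_simp
    ring
  have hex2 : ((n+2 : ℕ):ℝ) * e = 2 := by
    rw [hedef]
    push_cast
    field_simp
  rw [hex1, hex2, Real.rpow_two] at h1
  -- h1 : qdist q p ^ α ≤ c₂ * Q ^ 2
  have hpα : (0:ℝ) < (qdist q p) ^ α := Real.rpow_pos_of_pos hr1 α
  have hfin : C / Q ^ 2 ≤ C * c₂ * (qdist q p) ^ (-α) := by
    rw [Real.rpow_neg hr0, ← div_eq_mul_inv]
    rw [div_le_div_iff₀ (by positivity) hpα]
    nlinarith [h1, hC.le]
  have hQ2 : (0:ℝ) < Q ^ 2 := by positivity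
  have hlogQ : Real.log (Q ^ 2 + C) - Real.log (Q ^ 2) ≤ C / Q ^ 2 := by
    rw [← Real.log_div (by positivity) (ne_of_gt hQ2)]
    have hx : (Q ^ 2 + C) / Q ^ 2 = 1 + C / Q ^ 2 := by field_simp
    rw [hx]
    have := Real.log_le_sub_one_of_pos (x := 1 + C / Q ^ 2) (by positivity)
    linarith
  have hlogQ3 : Real.log (Q ^ 2 + 3 * C) - Real.log (Q ^ 2) ≤ 3 * C / Q ^ 2 := by
    rw [← Real.log_div (by positivity) (ne_of_gt hQ2)]
    have hx : (Q ^ 2 + 3 * C) / Q ^ 2 = 1 + 3 * C / Q ^ 2 := by field_simp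
    rw [hx]
    have := Real.log_le_sub_one_of_pos (x := 1 + 3 * C / Q ^ 2) (by positivity)
    linarith
  obtain ⟨hl1, hl2⟩ := hlow p hqp
  obtain ⟨hu1, hu2⟩ := hup p
  refine ⟨⟨by linarith, ?_⟩, ⟨by linarith, ?_⟩⟩
  · have : u₁ p - 3/8 * Real.log (Q ^ 2) ≤ 3/8 * (C / Q ^ 2) := by
      calc u₁ p - 3/8 * Real.log (Q ^ 2)
          ≤ 3/8 * Real.log (Q ^ 2 + C) - 3/8 * Real.log (Q ^ 2) := by linarith
        _ = 3/8 * (Real.log (Q ^ 2 + C) - Real.log (Q ^ 2)) := by ring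
        _ ≤ 3/8 * (C / Q ^ 2) := by linarith
    calc u₁ p - 3/8 * Real.log (Q ^ 2) ≤ 3/8 * (C / Q ^ 2) := this
      _ ≤ 3/8 * (C * c₂ * (qdist q p) ^ (-α)) := by linarith
      _ = 3/8 * C * c₂ * (qdist q p) ^ (-α) := by ring
  · have : u₂ p - 1/8 * Real.log (Q ^ 2) ≤ 3/8 * (C / Q ^ 2) := by
      calc u₂ p - 1/8 * Real.log (Q ^ 2)
          ≤ 1/8 * Real.log (Q ^ 2 + 3 * C) - 1/8 * Real.log (Q ^ 2) := by linarith
        _ = 1/8 * (Real.log (Q ^ 2 + 3 * C) - Real.log (Q ^ 2)) := by ring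
        _ ≤ 1/8 * (3 * C / Q ^ 2) := by linarith
        _ = 3/8 * (C / Q ^ 2) := by ring
    calc u₂ p - 1/8 * Real.log (Q ^ 2) ≤ 3/8 * (C / Q ^ 2) := this
      _ ≤ 3/8 * (C * c₂ * (qdist q p) ^ (-α)) := by linarith
      _ = 3/8 * C * c₂ * (qdist q p) ^ (-α) := by ring
end

section
/- Let q be a complex polynomial of degree n ≥ 1 and let (u₁, u₂) be a smooth solution on ℂ of the planar Hitchin system associated to q satisfying (3/8) log|q|² ≤ u₁ ≤ (3/8) log(|q|² + C) and (1/8) log|q|² ≤ u₂ ≤ (1/8) log(|q|² + 3C) for some C > 0. Define the induced metric density g_f(z) = e^{−2u₁(z)}|q(z)|² + 2e^{u₁(z) − u₂(z)} + e^{2u₂(z)}. Then there exist constants C' > 0 and M > 0 such that for every z ∈ ℂ with |q(z)| ≥ M one has |g_f(z) − 4|q(z)|^{1/2}| ≤ C' · |q(z)|^{1/2} · |q(z)|^{−2}; in particular g_f is comparable to 4|q|^{1/2} at the end of ℂ with multiplicative error 1 + O(|q|^{−2}). -/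
/-- The conformal density of the induced metric on the associated minimal surface:
`g_f = e^{−2u₁}|q|² + 2 e^{u₁−u₂} + e^{2u₂}`. -/
noncomputable def inducedDens (q : Polynomial ℂ) (u₁ u₂ : ℂ → ℝ) (z : ℂ) : ℝ :=
  Real.exp (-2 * u₁ z) * ‖q.eval z‖ ^ 2 +
    2 * Real.exp (u₁ z - u₂ z) + Real.exp (2 * u₂ z)

/-- Bernoulli upper bound: `(1+x)^a ≤ 1 + a x` for `0 ≤ a ≤ 1`, `0 ≤ x`. -/
lemma bern_up {x a : ℝ} (hx : 0 ≤ x) (ha0 : 0 ≤ a) (ha1 : a ≤ 1) :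
    (1 + x) ^ a ≤ 1 + a * x :=
  rpow_one_add_le_one_add_mul_self (by linarith) ha0 ha1

/-- Bernoulli lower bound: `1 - a x ≤ (1+x)^(-a)` for `0 ≤ a ≤ 1`, `0 ≤ x`. -/
lemma bern_down {x a : ℝ} (hx : 0 ≤ x) (ha0 : 0 ≤ a) (ha1 : a ≤ 1) :
    1 - a * x ≤ (1 + x) ^ (-a) := by
  have h1 : (0:ℝ) < 1 + x := by linarith
  rcases le_or_gt (1 - a * x) 0 with h | h
  · exact h.trans (Real.rpow_pos_of_pos h1 _).le
  · have hp : 0 < (1 + x) ^ a := Real.rpow_pos_of_pos h1 a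
    have h2 : (1 - a * x) * (1 + x) ^ a ≤ 1 := by
      calc (1 - a * x) * (1 + x) ^ a ≤ (1 - a * x) * (1 + a * x) :=
            mul_le_mul_of_nonneg_left (bern_up hx ha0 ha1) h.le
        _ = 1 - (a * x) ^ 2 := by ring
        _ ≤ 1 := by nlinarith [sq_nonneg (a * x)]
    rw [Real.rpow_neg h1.le, ← one_div]
    rw [le_div_iff₀ hp]
    exact h2

/-- **Asymptotics of the induced metric.** If `(u₁,u₂)` solves the planar Hitchin
system associated to `q` of degree `n ≥ 1` between the sub- and supersolutions, then
there are `C', M > 0` with `|g_f(z) − 4|q(z)|^{1/2}| ≤ C' |q(z)|^{1/2} |q(z)|^{−2}`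
whenever `|q(z)| ≥ M`. -/
theorem stmt_11 (q : Polynomial ℂ) (n : ℕ) (hn : 1 ≤ n) (hq : q.natDegree = n)
    (C : ℝ) (hC : 0 < C) (u₁ u₂ : ℂ → ℝ)
    (hsm₁ : ContDiff ℝ (⊤ : ℕ∞) u₁) (hsm₂ : ContDiff ℝ (⊤ : ℕ∞) u₂)
    (hsol : ∀ z : ℂ,
      lap u₁ z =
          Real.exp (u₁ z - u₂ z) -
            Real.exp (-2 * u₁ z) * ‖q.eval z‖ ^ 2 ∧
      lap u₂ z = Real.exp (2 * u₂ z) - Real.exp (u₁ z - u₂ z))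
    (hlow : ∀ z : ℂ, q.eval z ≠ 0 →
      (3 / 8) * Real.log (‖q.eval z‖ ^ 2) ≤ u₁ z ∧
      (1 / 8) * Real.log (‖q.eval z‖ ^ 2) ≤ u₂ z)
    (hup : ∀ z : ℂ,
      u₁ z ≤ (3 / 8) * Real.log (‖q.eval z‖ ^ 2 + C) ∧
      u₂ z ≤ (1 / 8) * Real.log (‖q.eval z‖ ^ 2 + 3 * C)) :
    ∃ C' M : ℝ, 0 < C' ∧ 0 < M ∧
      ∀ z : ℂ, M ≤ ‖q.eval z‖ →
        |inducedDens q u₁ u₂ z - 4 * Real.sqrt (‖q.eval z‖)| ≤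
          C' * Real.sqrt (‖q.eval z‖) / ‖q.eval z‖ ^ 2 := by
  refine ⟨3 / 2 * C, 1, by linarith, one_pos, ?_⟩
  intro z hz
  have hqz : q.eval z ≠ 0 := by
    intro h; rw [h] at hz; simp only [norm_zero] at hz; linarith
  obtain ⟨h1l, h2l⟩ := hlow z hqz
  obtain ⟨h1u, h2u⟩ := hup z
  simp only [inducedDens]
  set t := ‖q.eval z‖ with ht_def
  have ht0 : 0 < t := lt_of_lt_of_le one_pos hz
  set T := t ^ 2 with hT_def
  have hT0 : 0 < T := by positivity
  have hTC0 : 0 < T + C := by linarith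
  have hT3C0 : 0 < T + 3 * C := by linarith
  -- exponential bounds on the three terms, in rpow form
  have eA_ub : Real.exp (-2 * u₁ z) ≤ T ^ (-((3:ℝ)/4)) := by
    rw [Real.rpow_def_of_pos hT0]
    exact Real.exp_le_exp.2 (by linarith)
  have eA_lb : (T + C) ^ (-((3:ℝ)/4)) ≤ Real.exp (-2 * u₁ z) := by
    rw [Real.rpow_def_of_pos hTC0]
    exact Real.exp_le_exp.2 (by linarith)
  have eB_ub : Real.exp (u₁ z - u₂ z) ≤ (T + C) ^ ((3:ℝ)/8) * T ^ (-((1:ℝ)/8)) := by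
    rw [Real.rpow_def_of_pos hTC0, Real.rpow_def_of_pos hT0, ← Real.exp_add]
    exact Real.exp_le_exp.2 (by linarith)
  have eB_lb : T ^ ((3:ℝ)/8) * (T + 3 * C) ^ (-((1:ℝ)/8)) ≤ Real.exp (u₁ z - u₂ z) := by
    rw [Real.rpow_def_of_pos hT0, Real.rpow_def_of_pos hT3C0, ← Real.exp_add]
    exact Real.exp_le_exp.2 (by linarith)
  have eD_ub : Real.exp (2 * u₂ z) ≤ (T + 3 * C) ^ ((1:ℝ)/4) := by
    rw [Real.rpow_def_of_pos hT3C0]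
    exact Real.exp_le_exp.2 (by linarith)
  have eD_lb : T ^ ((1:ℝ)/4) ≤ Real.exp (2 * u₂ z) := by
    rw [Real.rpow_def_of_pos hT0]
    exact Real.exp_le_exp.2 (by linarith)
  -- basic rpow algebra
  have hfac : ∀ D a : ℝ, 0 ≤ D → (T + D) ^ a = T ^ a * (1 + D / T) ^ a := by
    intro D a hD
    have h1 : 0 ≤ 1 + D / T := by
      have := div_nonneg hD hT0.le; linarith
    rw [show T + D = T * (1 + D / T) by field_simp, Real.mul_rpow hT0.le h1]
  have hs0 : 0 < T ^ ((1:ℝ)/4) := Real.rpow_pos_of_pos hT0 _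
  have hxC : (0:ℝ) ≤ C / T := div_nonneg hC.le hT0.le
  have hxC3 : (0:ℝ) ≤ 3 * C / T := div_nonneg (by linarith) hT0.le
  have hsq : Real.sqrt t = T ^ ((1:ℝ)/4) := by
    rw [Real.sqrt_eq_rpow, hT_def, ← Real.rpow_natCast t 2, ← Real.rpow_mul ht0.le]
    norm_num
  have idA : T ^ (-((3:ℝ)/4)) * T = T ^ ((1:ℝ)/4) := by
    calc T ^ (-((3:ℝ)/4)) * T = T ^ (-((3:ℝ)/4)) * T ^ (1:ℝ) := by rw [Real.rpow_one]
      _ = T ^ (-((3:ℝ)/4) + 1) := (Real.rpow_add hT0 _ _).symm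
      _ = T ^ ((1:ℝ)/4) := by norm_num
  have idB : T ^ ((3:ℝ)/8) * T ^ (-((1:ℝ)/8)) = T ^ ((1:ℝ)/4) := by
    rw [← Real.rpow_add hT0]; norm_num
  -- the six clean bounds
  have hA1 : Real.exp (-2 * u₁ z) * T ≤ T ^ ((1:ℝ)/4) := by
    calc Real.exp (-2 * u₁ z) * T ≤ T ^ (-((3:ℝ)/4)) * T :=
          mul_le_mul_of_nonneg_right eA_ub hT0.le
      _ = T ^ ((1:ℝ)/4) := idA
  have hA2 : T ^ ((1:ℝ)/4) - 3/4 * (C * T ^ ((1:ℝ)/4) / T) ≤ Real.exp (-2 * u₁ z) * T := by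
    have i1 : (T + C) ^ (-((3:ℝ)/4)) * T = T ^ ((1:ℝ)/4) * (1 + C / T) ^ (-((3:ℝ)/4)) := by
      rw [hfac C (-((3:ℝ)/4)) hC.le, mul_right_comm, idA]
    have i2 : T ^ ((1:ℝ)/4) * (1 - 3/4 * (C / T)) ≤
        T ^ ((1:ℝ)/4) * (1 + C / T) ^ (-((3:ℝ)/4)) :=
      mul_le_mul_of_nonneg_left (bern_down hxC (by norm_num) (by norm_num)) hs0.le
    have i3 : (T + C) ^ (-((3:ℝ)/4)) * T ≤ Real.exp (-2 * u₁ z) * T :=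
      mul_le_mul_of_nonneg_right eA_lb hT0.le
    have i4 : T ^ ((1:ℝ)/4) - 3/4 * (C * T ^ ((1:ℝ)/4) / T) =
        T ^ ((1:ℝ)/4) * (1 - 3/4 * (C / T)) := by ring
    rw [i4]
    calc T ^ ((1:ℝ)/4) * (1 - 3/4 * (C / T)) ≤ (T + C) ^ (-((3:ℝ)/4)) * T := by
          rw [i1]; exact i2
      _ ≤ _ := i3
  have hB1 : Real.exp (u₁ z - u₂ z) ≤ T ^ ((1:ℝ)/4) + 3/8 * (C * T ^ ((1:ℝ)/4) / T) := by
    have i1 : (T + C) ^ ((3:ℝ)/8) * T ^ (-((1:ℝ)/8)) =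
        T ^ ((1:ℝ)/4) * (1 + C / T) ^ ((3:ℝ)/8) := by
      rw [hfac C ((3:ℝ)/8) hC.le, mul_right_comm, idB]
    have i2 : T ^ ((1:ℝ)/4) * (1 + C / T) ^ ((3:ℝ)/8) ≤
        T ^ ((1:ℝ)/4) * (1 + 3/8 * (C / T)) :=
      mul_le_mul_of_nonneg_left (bern_up hxC (by norm_num) (by norm_num)) hs0.le
    have i4 : T ^ ((1:ℝ)/4) * (1 + 3/8 * (C / T)) =
        T ^ ((1:ℝ)/4) + 3/8 * (C * T ^ ((1:ℝ)/4) / T) := by ring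
    calc Real.exp (u₁ z - u₂ z) ≤ (T + C) ^ ((3:ℝ)/8) * T ^ (-((1:ℝ)/8)) := eB_ub
      _ = T ^ ((1:ℝ)/4) * (1 + C / T) ^ ((3:ℝ)/8) := i1
      _ ≤ T ^ ((1:ℝ)/4) * (1 + 3/8 * (C / T)) := i2
      _ = _ := i4
  have hB2 : T ^ ((1:ℝ)/4) - 3/8 * (C * T ^ ((1:ℝ)/4) / T) ≤ Real.exp (u₁ z - u₂ z) := by
    have i1 : T ^ ((3:ℝ)/8) * (T + 3 * C) ^ (-((1:ℝ)/8)) =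
        T ^ ((1:ℝ)/4) * (1 + 3 * C / T) ^ (-((1:ℝ)/8)) := by
      rw [hfac (3 * C) (-((1:ℝ)/8)) (by linarith), ← mul_assoc, idB]
    have i2 : T ^ ((1:ℝ)/4) * (1 - 1/8 * (3 * C / T)) ≤
        T ^ ((1:ℝ)/4) * (1 + 3 * C / T) ^ (-((1:ℝ)/8)) :=
      mul_le_mul_of_nonneg_left (bern_down hxC3 (by norm_num) (by norm_num)) hs0.le
    have i4 : T ^ ((1:ℝ)/4) - 3/8 * (C * T ^ ((1:ℝ)/4) / T) =
        T ^ ((1:ℝ)/4) * (1 - 1/8 * (3 * C / T)) := by ring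
    rw [i4]
    calc T ^ ((1:ℝ)/4) * (1 - 1/8 * (3 * C / T)) ≤
          T ^ ((3:ℝ)/8) * (T + 3 * C) ^ (-((1:ℝ)/8)) := by rw [i1]; exact i2
      _ ≤ _ := eB_lb
  have hD1 : Real.exp (2 * u₂ z) ≤ T ^ ((1:ℝ)/4) + 3/4 * (C * T ^ ((1:ℝ)/4) / T) := by
    have i1 : (T + 3 * C) ^ ((1:ℝ)/4) = T ^ ((1:ℝ)/4) * (1 + 3 * C / T) ^ ((1:ℝ)/4) :=
      hfac (3 * C) ((1:ℝ)/4) (by linarith)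
    have i2 : T ^ ((1:ℝ)/4) * (1 + 3 * C / T) ^ ((1:ℝ)/4) ≤
        T ^ ((1:ℝ)/4) * (1 + 1/4 * (3 * C / T)) :=
      mul_le_mul_of_nonneg_left (bern_up hxC3 (by norm_num) (by norm_num)) hs0.le
    have i4 : T ^ ((1:ℝ)/4) * (1 + 1/4 * (3 * C / T)) =
        T ^ ((1:ℝ)/4) + 3/4 * (C * T ^ ((1:ℝ)/4) / T) := by ring
    calc Real.exp (2 * u₂ z) ≤ (T + 3 * C) ^ ((1:ℝ)/4) := eD_ub
      _ = T ^ ((1:ℝ)/4) * (1 + 3 * C / T) ^ ((1:ℝ)/4) := i1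
      _ ≤ T ^ ((1:ℝ)/4) * (1 + 1/4 * (3 * C / T)) := i2
      _ = _ := i4
  -- assemble
  rw [hsq]
  have hgoal : 3 / 2 * C * T ^ ((1:ℝ)/4) / T = 3/2 * (C * T ^ ((1:ℝ)/4) / T) := by ring
  rw [hgoal, abs_le]
  constructor <;> linarith
end

section
/- Let n ≥ 2 and let (q_i)_{i∈ℕ} be a sequence of complex polynomials of the form q_i(z) = z^n + a_{n−1,i} z^{n−1} + ⋯ + a_{1,i} z (monic of degree n with constant term 0). Suppose the coefficient sequences are not all bounded, i.e. sup_i max_{1 ≤ j ≤ n−1} |a_{j,i}| = ∞. Then there exist a subsequence (q_{i_k}), a sequence λ_k ∈ ℂ ∖ {0}, an integer m with 1 ≤ m ≤ n−1, and a monic polynomial q_∞ of degree m, such that the rescaled polynomials w ↦ λ_k^{−4} · q_{i_k}(λ_k^{−1} w) converge coefficientwise to q_∞ as k → ∞; that is, for each j with 1 ≤ j ≤ n−1, λ_k^{−j−4} a_{j,i_k} converges to the z^j-coefficient of q_∞, and λ_k^{−n−4} → 0. -/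
open Filter

private lemma zpow_aux {G₀ : Type*} [GroupWithZero G₀] (x : G₀) (j : ℕ) :
    x ^ (-(j : ℤ) - 4) = (x ^ (j + 4))⁻¹ := by
  rw [show -(j : ℤ) - 4 = -((j + 4 : ℕ) : ℤ) by push_cast; ring, zpow_neg, zpow_natCast]

/-- **Rescaled limits of divergent sequences of polynomial quartic differentials.**
If `q_i` are monic of degree `n ≥ 2` with zero constant term and unbounded
coefficients, then along a subsequence there are `λ_k ≠ 0` such that the rescaled
polynomials `w ↦ λ_k^{−4} q_{i_k}(λ_k^{−1} w)` converge coefficientwise to a monic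
polynomial `q_∞` of degree `m` with `1 ≤ m ≤ n−1`; the `w^j`-coefficient of the
rescaling is `λ_k^{−j−4} a_{j,i_k}`, and `λ_k^{−n−4} → 0`. -/
theorem stmt_12 (n : ℕ) (hn : 2 ≤ n) (q : ℕ → Polynomial ℂ)
    (hmon : ∀ i, (q i).Monic ∧ (q i).natDegree = n ∧ (q i).coeff 0 = 0)
    (hunbdd : ∀ M : ℝ, ∃ i : ℕ, ∃ j : ℕ, 1 ≤ j ∧ j ≤ n - 1 ∧
      M < ‖(q i).coeff j‖) :
    ∃ φ : ℕ → ℕ, StrictMono φ ∧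
      ∃ lam : ℕ → ℂ, (∀ k, lam k ≠ 0) ∧
        ∃ m : ℕ, 1 ≤ m ∧ m ≤ n - 1 ∧
          ∃ qlim : Polynomial ℂ, qlim.Monic ∧ qlim.natDegree = m ∧
            (∀ j : ℕ, 1 ≤ j → j ≤ n - 1 →
              Tendsto (fun k : ℕ => lam k ^ (-(j : ℤ) - 4) * (q (φ k)).coeff j)
                atTop (nhds (qlim.coeff j))) ∧
            Tendsto (fun k : ℕ => lam k ^ (-(n : ℤ) - 4)) atTop (nhds 0) := by
  classical
  set s : Finset ℕ := Finset.Icc 1 (n - 1) with hs_def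
  have hmem_s : ∀ j : ℕ, j ∈ s ↔ 1 ≤ j ∧ j ≤ n - 1 := by
    intro j; simp [hs_def]
  have hs : s.Nonempty := ⟨1, (hmem_s 1).2 ⟨le_rfl, by omega⟩⟩
  set a : ℕ → ℕ → ℂ := fun i j => (q i).coeff j with ha_def
  set r : ℕ → ℕ → ℝ := fun i j => ‖a i j‖ ^ (((j : ℝ) + 4)⁻¹) with hr_def
  set L : ℕ → ℝ := fun i => s.sup' hs (r i) with hL_def
  -- Key unboundedness of `L`.
  have key : ∀ M : ℝ, ∃ i, M < L i := by
    intro M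
    set M1 : ℝ := max M 1 with hM1_def
    have hM1one : (1 : ℝ) ≤ M1 := le_max_right M 1
    have hM1nonneg : (0 : ℝ) ≤ M1 := le_trans zero_le_one hM1one
    obtain ⟨i, j, hj1, hj2, hij⟩ := hunbdd (M1 ^ (n + 3))
    have hjs : j ∈ s := (hmem_s j).2 ⟨hj1, hj2⟩
    refine ⟨i, lt_of_lt_of_le ?_ (Finset.le_sup' (r i) hjs)⟩
    have h1 : M1 ^ (j + 4) ≤ M1 ^ (n + 3) := pow_le_pow_right₀ hM1one (by omega)
    have h2 : M1 ^ (j + 4) < ‖a i j‖ := lt_of_le_of_lt h1 hij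
    have hj4 : ((j : ℝ) + 4) ≠ 0 := by positivity
    calc M ≤ M1 := le_max_left _ _
      _ = (M1 ^ (j + 4) : ℝ) ^ (((j : ℝ) + 4)⁻¹) := by
          rw [← Real.rpow_natCast M1 (j + 4), ← Real.rpow_mul hM1nonneg]
          push_cast
          rw [mul_inv_cancel₀ hj4, Real.rpow_one]
      _ < ‖a i j‖ ^ (((j : ℝ) + 4)⁻¹) := by
          exact Real.rpow_lt_rpow (by positivity) h2 (by positivity)
  -- Extract a subsequence with `L → ∞`.
  have freq : ∀ m : ℕ, ∃ᶠ i in atTop, (m : ℝ) < L i := by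
    intro m
    rw [frequently_atTop]
    intro N
    set M₀ : ℝ := ∑ i ∈ Finset.range N, |L i| with hM₀_def
    have hM₀ : ∀ i ∈ Finset.range N, L i ≤ M₀ := by
      intro i hi
      refine le_trans (le_abs_self _) ?_
      exact Finset.single_le_sum (f := fun i => |L i|) (fun _ _ => abs_nonneg _) hi
    obtain ⟨i, hi⟩ := key (max (m : ℝ) M₀)
    refine ⟨i, ?_, lt_of_le_of_lt (le_max_left _ _) hi⟩
    by_contra h
    push_neg at h
    exact absurd (hM₀ i (Finset.mem_range.2 h))
      (not_le.2 (lt_of_le_of_lt (le_max_right _ _) hi))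
  obtain ⟨φ₀, hφ₀mono, hφ₀⟩ := extraction_forall_of_frequently freq
  -- Basic bounds on `L`.
  have hbound : ∀ i, ∀ j ∈ s, ‖a i j‖ = r i j ^ (j + 4) := by
    intro i j _
    rw [hr_def]
    simp only
    rw [← Real.rpow_natCast (‖a i j‖ ^ (((j : ℝ) + 4)⁻¹)) (j + 4),
      ← Real.rpow_mul (norm_nonneg _)]
    push_cast
    rw [inv_mul_cancel₀ (by positivity : ((j : ℝ) + 4) ≠ 0), Real.rpow_one]
  have habs_le : ∀ i, ∀ j ∈ s, ‖a i j‖ ≤ L i ^ (j + 4) := by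
    intro i j hj
    rw [hbound i j hj]
    exact pow_le_pow_left₀ (Real.rpow_nonneg (norm_nonneg _) _)
      (Finset.le_sup' (r i) hj) _
  -- argmax function
  have hargmax : ∀ i, ∃ j, j ∈ s ∧ L i = r i j := fun i =>
    Finset.exists_mem_eq_sup' hs (r i)
  choose Jf hJfs hJfeq using hargmax
  have habs_eq : ∀ i, ‖a i (Jf i)‖ = L i ^ (Jf i + 4) := by
    intro i
    rw [hbound i (Jf i) (hJfs i), hJfeq i]
  -- Pigeonhole to fix the argmax index along a subsequence.
  have hpig : ∃ J0, J0 ∈ s ∧ ∃ᶠ k in atTop, Jf (φ₀ k) = J0 := by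
    by_contra h
    push_neg at h
    have hev : ∀ᶠ k in atTop, ∀ J0 ∈ s, Jf (φ₀ k) ≠ J0 := by
      rw [Filter.eventually_all_finset]
      intro J0 hJ0
      exact (h J0 hJ0)
    obtain ⟨k, hk⟩ := hev.exists
    exact hk (Jf (φ₀ k)) (hJfs (φ₀ k)) rfl
  obtain ⟨J0, hJ0s, hJ0freq⟩ := hpig
  obtain ⟨φ₂, hφ₂mono, hφ₂⟩ := extraction_of_frequently_atTop hJ0freq
  set ψ : ℕ → ℕ := φ₀ ∘ φ₂ with hψ_def
  have hψmono : StrictMono ψ := hφ₀mono.comp hφ₂mono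
  have hLψpos : ∀ k, 0 < L (ψ k) := by
    intro k
    exact lt_of_le_of_lt (Nat.cast_nonneg _) (hφ₀ (φ₂ k))
  -- the bounded vectors
  set V : ℕ → (Fin n → ℂ) := fun k j =>
    ((L (ψ k) : ℝ) : ℂ) ^ (-(j.val : ℤ) - 4) * a (ψ k) j.val with hV_def
  have hVnorm_eq : ∀ k (j : Fin n),
      ‖V k j‖ = (L (ψ k) ^ (j.val + 4))⁻¹ * ‖a (ψ k) j.val‖ := by
    intro k j
    rw [hV_def]
    simp only
    rw [norm_mul, norm_zpow, Complex.norm_real, Real.norm_eq_abs,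
      abs_of_pos (hLψpos k), zpow_aux]
  have hVnorm : ∀ k (j : Fin n), ‖V k j‖ ≤ 1 := by
    intro k j
    rcases Nat.eq_zero_or_pos j.val with h0 | h1
    · rw [hVnorm_eq]
      rw [h0]
      have : a (ψ k) 0 = 0 := (hmon (ψ k)).2.2
      rw [this]
      simp
    · have hjs : j.val ∈ s := (hmem_s j.val).2 ⟨h1, by omega⟩
      rw [hVnorm_eq]
      have hpow : (0 : ℝ) < L (ψ k) ^ (j.val + 4) := pow_pos (hLψpos k) _
      calc (L (ψ k) ^ (j.val + 4))⁻¹ * ‖a (ψ k) j.val‖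
          ≤ (L (ψ k) ^ (j.val + 4))⁻¹ * L (ψ k) ^ (j.val + 4) :=
            mul_le_mul_of_nonneg_left (habs_le (ψ k) j.val hjs) (inv_nonneg.2 hpow.le)
        _ = 1 := inv_mul_cancel₀ hpow.ne'
  have hJ0n : J0 < n := by
    have := (hmem_s J0).1 hJ0s
    omega
  set j0fin : Fin n := ⟨J0, hJ0n⟩ with hj0_def
  have hVJ0 : ∀ k, ‖V k j0fin‖ = 1 := by
    intro k
    rw [hVnorm_eq]
    have : Jf (ψ k) = J0 := hφ₂ k
    have habs : ‖a (ψ k) J0‖ = L (ψ k) ^ (J0 + 4) := by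
      rw [← this]
      exact habs_eq (ψ k)
    simp only [hj0_def]
    rw [habs]
    exact inv_mul_cancel₀ (pow_pos (hLψpos k) _).ne'
  -- Bolzano–Weierstrass
  have hmem : ∀ k, V k ∈ Metric.closedBall (0 : Fin n → ℂ) 1 := by
    intro k
    rw [Metric.mem_closedBall, dist_zero_right]
    exact (pi_norm_le_iff_of_nonneg zero_le_one).2 (hVnorm k)
  obtain ⟨b, _, φ₃, hφ₃mono, hVb⟩ :=
    (isCompact_closedBall (0 : Fin n → ℂ) 1).tendsto_subseq hmem
  have hcoord : ∀ j : Fin n, Tendsto (fun k => V (φ₃ k) j) atTop (nhds (b j)) := by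
    intro j
    exact (tendsto_pi_nhds.1 hVb) j
  have hb1 : ‖b j0fin‖ = 1 := by
    have h1s : Tendsto (fun k => ‖V (φ₃ k) j0fin‖) atTop (nhds ‖b j0fin‖) :=
      (hcoord j0fin).norm
    have heq : (fun k => ‖V (φ₃ k) j0fin‖) = fun _ => (1 : ℝ) :=
      funext fun k => hVJ0 (φ₃ k)
    rw [heq] at h1s
    exact tendsto_nhds_unique h1s tendsto_const_nhds
  set b' : ℕ → ℂ := fun j => if h : j < n then b ⟨j, h⟩ else 0 with hb'_def
  have hb'J0 : b' J0 ≠ 0 := by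
    rw [hb'_def]
    simp only [dif_pos hJ0n]
    intro h
    rw [show (⟨J0, hJ0n⟩ : Fin n) = j0fin from rfl] at h
    rw [h] at hb1
    simp at hb1
  -- the degree of the limit
  set t : Finset ℕ := s.filter (fun j => b' j ≠ 0) with ht_def
  have ht : t.Nonempty := ⟨J0, Finset.mem_filter.2 ⟨hJ0s, hb'J0⟩⟩
  set m : ℕ := t.max' ht with hm_def
  have hmt : m ∈ t := t.max'_mem ht
  have hms : m ∈ s := (Finset.mem_filter.1 hmt).1
  have hbm : b' m ≠ 0 := (Finset.mem_filter.1 hmt).2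
  have hm1 : 1 ≤ m := ((hmem_s m).1 hms).1
  have hm2 : m ≤ n - 1 := ((hmem_s m).1 hms).2
  have hzero : ∀ j ∈ s, m < j → b' j = 0 := by
    intro j hj hlt
    by_contra hne
    exact absurd (Finset.le_max' t j (Finset.mem_filter.2 ⟨hj, hne⟩)) (not_le.2 hlt)
  -- the root μ
  obtain ⟨μ, hμ⟩ := IsAlgClosed.exists_pow_nat_eq (b' m) (n := m + 4) (by omega)
  have hμ0 : μ ≠ 0 := by
    intro h
    apply hbm
    rw [← hμ, h, zero_pow (by omega)]
  -- final data
  set φ : ℕ → ℕ := fun k => ψ (φ₃ k) with hφ_def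
  have hφmono : StrictMono φ := hψmono.comp hφ₃mono
  set LL : ℕ → ℝ := fun k => L (ψ (φ₃ k)) with hLL_def
  have hLLpos : ∀ k, 0 < LL k := fun k => hLψpos (φ₃ k)
  set lam : ℕ → ℂ := fun k => μ * ((LL k : ℝ) : ℂ) with hlam_def
  have hlamne : ∀ k, lam k ≠ 0 := by
    intro k
    exact mul_ne_zero hμ0 (by exact_mod_cast (hLLpos k).ne')
  have hLLtop : Tendsto LL atTop atTop := by
    apply tendsto_atTop_mono (f := fun k : ℕ => (k : ℝ))
    · intro k
      calc (k : ℝ) ≤ (φ₂ (φ₃ k) : ℝ) := by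
            exact_mod_cast (hφ₂mono.comp hφ₃mono).le_apply
        _ ≤ LL k := (hφ₀ (φ₂ (φ₃ k))).le
    · exact tendsto_natCast_atTop_atTop
  set d : ℕ → ℂ := fun j => μ ^ (-(j : ℤ) - 4) * b' j with hd_def
  set qlim : Polynomial ℂ :=
    ∑ j ∈ Finset.range (m + 1), Polynomial.C (d j) * Polynomial.X ^ j with hqlim_def
  have hcoeff : ∀ i : ℕ, qlim.coeff i = if i ≤ m then d i else 0 := by
    intro i
    rw [hqlim_def, Polynomial.finset_sum_coeff]
    simp only [Polynomial.coeff_C_mul, Polynomial.coeff_X_pow, mul_ite, mul_one, mul_zero]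
    rw [Finset.sum_ite_eq (Finset.range (m + 1)) i d]
    simp [Nat.lt_succ_iff]
  have hdm : d m = 1 := by
    rw [hd_def]
    simp only
    rw [zpow_aux, hμ, inv_mul_cancel₀ hbm]
  have hcm : qlim.coeff m = 1 := by rw [hcoeff]; simp [hdm]
  have hnd : qlim.natDegree = m := by
    refine le_antisymm ?_ (Polynomial.le_natDegree_of_ne_zero (by rw [hcm]; exact one_ne_zero))
    refine Polynomial.natDegree_le_iff_coeff_eq_zero.2 fun N hN => ?_
    rw [hcoeff, if_neg (by omega)]
  have hmonic : qlim.Monic := by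
    rw [Polynomial.Monic, Polynomial.leadingCoeff, hnd, hcm]
  refine ⟨φ, hφmono, lam, hlamne, m, hm1, hm2, qlim, hmonic, hnd, ?_, ?_⟩
  · intro j hj1 hj2
    have hjn : j < n := by omega
    set jfin : Fin n := ⟨j, hjn⟩ with hjfin_def
    have hb'j : b' j = b jfin := by rw [hb'_def]; simp only [dif_pos hjn]; rfl
    have hqc : qlim.coeff j = d j := by
      rw [hcoeff]
      by_cases h : j ≤ m
      · rw [if_pos h]
      · rw [if_neg h, hd_def]
        simp only
        rw [hzero j ((hmem_s j).2 ⟨hj1, hj2⟩) (by omega), mul_zero]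
    have heqf : (fun k : ℕ => lam k ^ (-(j : ℤ) - 4) * (q (φ k)).coeff j)
        = fun k : ℕ => μ ^ (-(j : ℤ) - 4) * V (φ₃ k) jfin := by
      funext k
      rw [hlam_def, hV_def]
      simp only
      rw [mul_zpow, mul_assoc]
    rw [heqf, hqc, hd_def]
    simp only [hb'j]
    exact (hcoord jfin).const_mul _
  · have hLinv : Tendsto (fun k : ℕ => ((LL k ^ (n + 4))⁻¹ : ℝ)) atTop (nhds 0) :=
      ((tendsto_pow_atTop (by omega : n + 4 ≠ 0)).comp hLLtop).inv_tendsto_atTop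
    have hCinv : Tendsto (fun k : ℕ => (((LL k ^ (n + 4))⁻¹ : ℝ) : ℂ)) atTop (nhds 0) := by
      have h2 := (Complex.continuous_ofReal.tendsto 0).comp hLinv
      rw [Complex.ofReal_zero] at h2
      exact h2
    have heqf : (fun k : ℕ => lam k ^ (-(n : ℤ) - 4))
        = fun k : ℕ => μ ^ (-(n : ℤ) - 4) * (((LL k ^ (n + 4))⁻¹ : ℝ) : ℂ) := by
      funext k
      rw [hlam_def]
      simp only
      simp only [mul_zpow, zpow_aux]
      push_cast
      ring
    rw [heqf]
    have := hCinv.const_mul (μ ^ (-(n : ℤ) - 4))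
    simpa using this
end
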